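/- With the standing labeled-subshift setup, for a label 𝓜 the following are equivalent: (i) 𝓜 is a recurrent label; (ii) x[𝓜] is a recurrent point for the shift S on {0,1}^ℤ; (iii) x₊[𝓜] is a recurrent point for the shift S on {0,1}^ℤ. -/

import Mathlib

open Filter Topology

/-- `k : ℤ → ℤ` is `b`-expanding: `k(−n) = −k(n)` and `k(n+1) > b·Σ_{i=0}^{n} k(i)` for all
`n ≥ 0`. -/
def IsExpanding (b : ℕ) (k : ℤ → ℤ) : Prop :=
  (∀ n : ℤ, k (-n) = - k n) ∧
  ∀ n : ℕ, (b : ℤ) * ∑ i ∈ Finset.range (n + 1), k (i : ℤ) < k ((n : ℤ) + 1)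

/-- `j : Fin r → ℤ` is an expansion of `t`: nonzero entries with strictly decreasing absolute
values whose `k`-values sum to `t`. -/
def IsExpansion (k : ℤ → ℤ) (t : ℤ) (r : ℕ) (j : Fin r → ℤ) : Prop :=
  (∀ i : Fin r, j i ≠ 0) ∧ (∀ i₁ i₂ : Fin r, i₁ < i₂ → |j i₂| < |j i₁|) ∧
  t = ∑ i : Fin r, k (j i)

/-- `IP(k)`: the set of sums of finite subsets of the image set `k(ℤ)`. -/
def IPk (k : ℤ → ℤ) : Set ℤ :=
  {t | ∃ F : Finset ℤ, ↑F ⊆ Set.range k ∧ t = ∑ x ∈ F, x}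

/-- `IP₊(k)`: the set of sums of finite subsets of the image set `k(ℕ)` (positive arguments). -/
def IPkP (k : ℤ → ℤ) : Set ℤ :=
  {t | ∃ F : Finset ℤ, ↑F ⊆ k '' {j : ℤ | 0 < j} ∧ t = ∑ x ∈ F, x}

/-- A label: a hereditary set of ℕ-vectors (finitely supported functions `ℕ → ℕ`). -/
def IsLabel (M : Set (ℕ →₀ ℕ)) : Prop :=
  ∀ m₁ m : ℕ →₀ ℕ, m₁ ≤ m → m ∈ M → m₁ ∈ M

/-- `𝓜 − r = {w : w + r ∈ 𝓜}`. -/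
def Msub (M : Set (ℕ →₀ ℕ)) (r : ℕ →₀ ℕ) : Set (ℕ →₀ ℕ) := {w | w + r ∈ M}

/-- Specification of the partition data: each `D ℓ` is infinite, the `D ℓ` are pairwise
disjoint, and `lab n` is the index of the cell containing `n` (so the `D ℓ` cover `ℕ`). -/
def PartitionSpec (D : ℕ → Set ℕ) (lab : ℕ → ℕ) : Prop :=
  (∀ ℓ : ℕ, (D ℓ).Infinite) ∧ (∀ ℓ₁ ℓ₂ : ℕ, ℓ₁ ≠ ℓ₂ → D ℓ₁ ∩ D ℓ₂ = ∅) ∧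
  (∀ n : ℕ, n ∈ D (lab n))

/-- Specification that `R t` is the length vector `𝐫(t)` of the (unique) expansion of each
expanding time `t`. -/
def LengthVecSpec (k : ℤ → ℤ) (lab : ℕ → ℕ) (R : ℤ → ℕ →₀ ℕ) : Prop :=
  ∀ (t : ℤ) (r : ℕ) (j : Fin r → ℤ), IsExpansion k t r j →
    R t = ∑ i : Fin r, Finsupp.single (lab (j i).natAbs) 1

/-- `A[𝓜] = {t ∈ IP(k) : 𝐫(t) ∈ 𝓜}`. -/
def setA (k : ℤ → ℤ) (R : ℤ → ℕ →₀ ℕ) (M : Set (ℕ →₀ ℕ)) : Set ℤ :=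
  {t | t ∈ IPk k ∧ R t ∈ M}

/-- `A₊[𝓜] = A[𝓜] ∩ IP₊(k)`. -/
def setAP (k : ℤ → ℤ) (R : ℤ → ℕ →₀ ℕ) (M : Set (ℕ →₀ ℕ)) : Set ℤ :=
  setA k R M ∩ IPkP k

/-- The indicator point `χ(A) ∈ {0,1}^ℤ` of a set `A ⊆ ℤ`. -/
noncomputable def chiB (A : Set ℤ) : ℤ → Bool :=
  fun t => @decide (t ∈ A) (Classical.propDecidable _)

/-- `x[𝓜] = χ(A[𝓜])`. -/
noncomputable def xL (k : ℤ → ℤ) (R : ℤ → ℕ →₀ ℕ) (M : Set (ℕ →₀ ℕ)) : ℤ → Bool :=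
  chiB (setA k R M)

/-- `x₊[𝓜] = χ(A₊[𝓜])`. -/
noncomputable def xLP (k : ℤ → ℤ) (R : ℤ → ℕ →₀ ℕ) (M : Set (ℕ →₀ ℕ)) : ℤ → Bool :=
  chiB (setAP k R M)

/-- The iterated shift `Sⁿ` on `{0,1}^ℤ`: `(Sⁿx)_s = x_{s+n}`. -/
def shiftZ (n : ℤ) (x : ℤ → Bool) : ℤ → Bool := fun s => x (s + n)

/-- The standard metric on `{0,1}^ℤ`: `d(x,y) = inf {2^{-N} : x_t = y_t for all |t| < N}`. -/
noncomputable def bdist (x y : ℤ → Bool) : ℝ :=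
  sInf {r : ℝ | ∃ N : ℕ, (∀ t : ℤ, |t| < (N : ℤ) → x t = y t) ∧ r = (2 : ℝ) ^ (-(N : ℤ))}

/-- The indicator function of a set of ℕ-vectors, valued in the (discrete) two-point space. -/
noncomputable def labelInd (M : Set (ℕ →₀ ℕ)) : (ℕ →₀ ℕ) → Bool :=
  fun m => @decide (m ∈ M) (Classical.propDecidable _)

/-- The topology of the space of labels: the subspace topology induced from the product
topology on the power set of the set of ℕ-vectors (equivalently, the topology of the
ultrametric `d(𝓜₁,𝓜₂) = inf {2^{−N} : 𝓜₁ ∩ 𝓑_N = 𝓜₂ ∩ 𝓑_N}`). -/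
noncomputable def labTop : TopologicalSpace (Set (ℕ →₀ ℕ)) :=
  TopologicalSpace.induced labelInd inferInstance

/-- A label `𝓜` is recurrent if it lies in the closure of `{𝓜 − r : r > 0}` in the space of
labels. -/
def RecurrentLabel (M : Set (ℕ →₀ ℕ)) : Prop :=
  M ∈ @closure _ labTop {M' : Set (ℕ →₀ ℕ) | ∃ r : ℕ →₀ ℕ, 0 < r ∧ M' = Msub M r}

/-- `x` is a recurrent point for the shift: a cluster point of `(Sⁿ x)` as `n → +∞` or as
`n → −∞`. -/
def RecPt (x : ℤ → Bool) : Prop :=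
  MapClusterPt x (atTop : Filter ℤ) (fun n : ℤ => shiftZ n x) ∨
  MapClusterPt x (atBot : Filter ℤ) (fun n : ℤ => shiftZ n x)


/-!
Every `t ∈ IP(k)` is `∑_{j ∈ G} k j` for a unique finite set `G` of nonzero integers with
distinct absolute values. Since `k p > 3 ∑_{i<p} k i`, the top nonzero coefficient of an
integer combination `∑ cᵢ k i` with `|cᵢ| ≤ 3` dominates, so two such sums that are close
share all digits of large absolute value.

If `𝓜` is recurrent, pick `r > 0` with `𝓜 − r` agreeing with `𝓜` on the length vectors of a
window `[-W, W]`, and realise `r` by digits far above the scale of `W`, taken in the cells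
`D_ℓ`. Adding their sum `t` to `s ∈ [-W, W]` just appends these digits, so it preserves
`IP(k)` and adds `r` to `𝐫(s)`: `t` is a return time of `x[𝓜]` and of `x₊[𝓜]`.

Conversely, let `n` be a return time on a window large against the digits `≤ C`. Its digits
`≤ C`, forming `L`, must vanish: flipping their signs (for `x[𝓜]`) would make `-2 ∑ L` a
digit sum, which dominance rules out for `L ≠ ∅`, and dropping them (for `x₊[𝓜]`) would put
the negative number `-∑ L` into `A₊[𝓜]`. Then `r = 𝐫(n)` works for every `m` represented by
digits `≤ C`.
-/

open Finset

namespace IsExpanding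

variable {b : ℕ} {k : ℤ → ℤ}

lemma map_zero (hk : IsExpanding b k) : k 0 = 0 := by
  have := hk.1 0
  rw [neg_zero] at this
  omega

lemma nonneg (hk : IsExpanding b k) (n : ℕ) : 0 ≤ k n := by
  induction n using Nat.strong_induction_on with
  | _ n ih =>
    cases n with
    | zero => simp [hk.map_zero]
    | succ n =>
      have hsum : 0 ≤ ∑ i ∈ range (n + 1), k i := sum_nonneg fun i hi => ih i (mem_range.mp hi)
      have := hk.2 n
      push_cast
      nlinarith

lemma of_three_le (hk : IsExpanding b k) (hb : 3 ≤ b) : IsExpanding 3 k :=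
  ⟨hk.1, fun n => lt_of_le_of_lt
    (mul_le_mul_of_nonneg_right (by exact_mod_cast hb) (sum_nonneg fun i _ => hk.nonneg i))
    (hk.2 n)⟩

lemma three_mul_sum_lt (hk : IsExpanding 3 k) {p : ℕ} (hp : p ≠ 0) :
    3 * ∑ i ∈ range p, k i < k p := by
  obtain ⟨n, rfl⟩ := Nat.exists_eq_succ_of_ne_zero hp
  exact_mod_cast hk.2 n

lemma lt_succ (hk : IsExpanding 3 k) (n : ℕ) : k n < k (n + 1) := by
  have hle : k n ≤ ∑ i ∈ range (n + 1), k i :=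
    single_le_sum (fun i _ => hk.nonneg i) (self_mem_range_succ n)
  have := hk.2 n
  push_cast at this
  linarith [hk.nonneg n]

lemma strictMono (hk : IsExpanding 3 k) : StrictMono k := by
  refine strictMono_int_of_lt_succ fun n => ?_
  cases n with
  | ofNat n => exact_mod_cast hk.lt_succ n
  | negSucc n =>
    rw [Int.negSucc_eq, show -((n : ℤ) + 1) + 1 = -(n : ℤ) by omega, hk.1, hk.1, neg_lt_neg_iff]
    exact_mod_cast hk.lt_succ n

lemma le_apply (hk : IsExpanding 3 k) {a : ℤ} (ha : 0 ≤ a) : a ≤ k a := by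
  lift a to ℕ using ha
  induction a with
  | zero => simp [hk.map_zero]
  | succ n ih => have := hk.lt_succ n; push_cast at *; omega

lemma sign_mul_natAbs (hk : IsExpanding b k) (a : ℤ) : a.sign * k a.natAbs = k a := by
  rcases lt_trichotomy a 0 with ha | rfl | ha
  · rw [Int.sign_eq_neg_one_of_neg ha, Int.ofNat_natAbs_of_nonpos ha.le, hk.1]
    ring
  · simp [hk.map_zero]
  · rw [Int.sign_eq_one_of_pos ha, Int.natAbs_of_nonneg ha.le, one_mul]

end IsExpanding

section Dominance

variable {u c : ℕ → ℤ} {B : ℤ}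

lemma abs_sum_mul_le (hu : ∀ i, 0 ≤ u i) (hc : ∀ i, |c i| ≤ B) (P : ℕ) :
    |∑ i ∈ range P, c i * u i| ≤ B * ∑ i ∈ range P, u i := by
  rw [mul_sum]
  refine (abs_sum_le_sum_abs _ _).trans (sum_le_sum fun i _ => ?_)
  rw [abs_mul, abs_of_nonneg (hu i)]
  exact mul_le_mul_of_nonneg_right (hc i) (hu i)

/-- The top nonzero coefficient of `∑ cᵢ uᵢ` outweighs all lower terms. -/
lemma eq_zero_of_abs_sum_mul_le {N : ℤ} {C : ℕ} (hu : ∀ i, 0 ≤ u i) (hc : ∀ i, |c i| ≤ B)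
    (hdom : ∀ p, C < p → N + B * ∑ i ∈ range p, u i < u p) {P : ℕ}
    (hsum : |∑ i ∈ range P, c i * u i| ≤ N) {p : ℕ} (hCp : C < p) (hpP : p < P) : c p = 0 := by
  induction P with
  | zero => omega
  | succ P ih =>
    rw [sum_range_succ] at hsum
    have hcP : c P = 0 := by
      by_contra hne
      have htop : u P ≤ |c P * u P| := by
        rw [abs_mul, abs_of_nonneg (hu P)]
        exact le_mul_of_one_le_left (hu P) (Int.one_le_abs hne)
      have := abs_sum_mul_le hu hc P
      have := hdom P (by omega)
      linarith [abs_add' (c P * u P) (∑ i ∈ range P, c i * u i)]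
    rcases Nat.lt_succ_iff_lt_or_eq.mp hpP with hp | rfl
    · exact ih (by simpa [hcP] using hsum) hp
    · exact hcP

end Dominance

/-- The index set `{j₁, …, j_r}` of an expansion, forgetting the order. -/
def IsDigitSet (G : Finset ℤ) : Prop :=
  0 ∉ G ∧ Set.InjOn Int.natAbs G

def digitSum (k : ℤ → ℤ) (G : Finset ℤ) : ℤ := ∑ a ∈ G, k a

noncomputable def lengthVec (lab : ℕ → ℕ) (G : Finset ℤ) : ℕ →₀ ℕ :=
  ∑ a ∈ G, Finsupp.single (lab a.natAbs) 1

/-- The coefficient of `k i` in `digitSum k G` when `k` is odd. -/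
def digitCoeff (G : Finset ℤ) (i : ℕ) : ℤ := ∑ a ∈ G with a.natAbs = i, a.sign

def digitSums (k : ℤ → ℤ) (P : Set ℤ) : Set ℤ :=
  {t | ∃ G : Finset ℤ, IsDigitSet G ∧ ↑G ⊆ P ∧ digitSum k G = t}

section DigitSets

variable {k : ℤ → ℤ} {G G₁ G₂ : Finset ℤ}

lemma IsDigitSet.mono (hG : IsDigitSet G) (h : G₁ ⊆ G) : IsDigitSet G₁ :=
  ⟨fun h0 => hG.1 (h h0), hG.2.mono (by exact_mod_cast h)⟩

lemma isDigitSet_of_subset_Ioi (hG : ↑G ⊆ Set.Ioi (0 : ℤ)) : IsDigitSet G :=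
  ⟨fun h0 => lt_irrefl (0 : ℤ) (hG h0), fun a ha c hc h => by
    have := hG ha; have := hG hc; simp only [Set.mem_Ioi] at *; omega⟩

lemma disjoint_of_natAbs_lt (h : ∀ a ∈ G₁, ∀ c ∈ G₂, a.natAbs < c.natAbs) : Disjoint G₁ G₂ :=
  Finset.disjoint_left.mpr fun a ha hc => lt_irrefl _ (h a ha a hc)

lemma IsDigitSet.union (h₁ : IsDigitSet G₁) (h₂ : IsDigitSet G₂)
    (h : ∀ a ∈ G₁, ∀ c ∈ G₂, a.natAbs < c.natAbs) : IsDigitSet (G₁ ∪ G₂) := by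
  refine ⟨by simp [h₁.1, h₂.1], ?_⟩
  rw [Finset.coe_union, Set.injOn_union (Finset.disjoint_coe.mpr (disjoint_of_natAbs_lt h))]
  exact ⟨h₁.2, h₂.2, fun a ha c hc => (h a ha c hc).ne⟩

lemma IsDigitSet.image_neg (hG : IsDigitSet G) : IsDigitSet (G.image Neg.neg) := by
  refine ⟨by simpa using hG.1, ?_⟩
  rintro _ ha _ hc h
  simp only [Finset.coe_image, Set.mem_image, Finset.mem_coe] at ha hc
  obtain ⟨a, ha, rfl⟩ := ha
  obtain ⟨c, hc, rfl⟩ := hc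
  rw [hG.2 ha hc (by simpa using h)]

lemma digitSum_union (h : Disjoint G₁ G₂) :
    digitSum k (G₁ ∪ G₂) = digitSum k G₁ + digitSum k G₂ := sum_union h

lemma lengthVec_union {lab : ℕ → ℕ} (h : Disjoint G₁ G₂) :
    lengthVec lab (G₁ ∪ G₂) = lengthVec lab G₁ + lengthVec lab G₂ := sum_union h

lemma digitSum_image_neg (hk : ∀ n, k (-n) = -k n) :
    digitSum k (G.image Neg.neg) = -digitSum k G := by
  rw [digitSum, digitSum, sum_image fun _ _ _ _ => neg_inj.mp, ← sum_neg_distrib]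
  exact sum_congr rfl fun a _ => hk a

lemma lengthVec_image_neg {lab : ℕ → ℕ} : lengthVec lab (G.image Neg.neg) = lengthVec lab G := by
  rw [lengthVec, lengthVec, sum_image fun _ _ _ _ => neg_inj.mp]
  simp

end DigitSets

section Coefficients

variable {b : ℕ} {k : ℤ → ℤ} {G G₁ G₂ : Finset ℤ}

lemma digitSum_eq_sum_digitCoeff (hk : IsExpanding b k) {P : ℕ} (hP : ∀ a ∈ G, a.natAbs < P) :
    digitSum k G = ∑ i ∈ range P, digitCoeff G i * k i := by
  have hfiber : ∀ i : ℕ, ∑ a ∈ G with a.natAbs = i, a.sign * k i =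
      ∑ a ∈ G with a.natAbs = i, a.sign * k a.natAbs :=
    fun i => sum_congr rfl fun a ha => by rw [(mem_filter.mp ha).2]
  simp_rw [digitCoeff, sum_mul, hfiber]
  rw [sum_fiberwise_of_maps_to fun a ha => mem_range.mpr (hP a ha)]
  exact sum_congr rfl fun a _ => (hk.sign_mul_natAbs a).symm

lemma IsDigitSet.digitCoeff_natAbs (hG : IsDigitSet G) {a : ℤ} (ha : a ∈ G) :
    digitCoeff G a.natAbs = a.sign := by
  have : G.filter (fun c => c.natAbs = a.natAbs) = {a} := by
    ext c
    simp only [mem_filter, mem_singleton]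
    exact ⟨fun hc => hG.2 hc.1 ha hc.2, by rintro rfl; exact ⟨ha, rfl⟩⟩
  rw [digitCoeff, this, sum_singleton]

lemma IsDigitSet.abs_digitCoeff_le_one (hG : IsDigitSet G) (i : ℕ) : |digitCoeff G i| ≤ 1 := by
  rcases (G.filter fun a => a.natAbs = i).eq_empty_or_nonempty with h | ⟨a, hai⟩
  · simp [digitCoeff, h]
  · obtain ⟨ha, rfl⟩ := mem_filter.mp hai
    rw [hG.digitCoeff_natAbs ha]
    rcases Int.sign_trichotomy a with h | h | h <;> simp [h]

lemma IsDigitSet.mem_of_digitCoeff_eq (h₁ : IsDigitSet G₁) (h₂ : IsDigitSet G₂) {a : ℤ}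
    (ha : a ∈ G₁) (h : digitCoeff G₁ a.natAbs = digitCoeff G₂ a.natAbs) : a ∈ G₂ := by
  rw [h₁.digitCoeff_natAbs ha] at h
  have hne : digitCoeff G₂ a.natAbs ≠ 0 := by
    rw [← h, Ne, Int.sign_eq_zero_iff_zero]
    exact ne_of_mem_of_not_mem ha h₁.1
  obtain ⟨c, hc, -⟩ := exists_ne_zero_of_sum_ne_zero hne
  obtain ⟨hc, hca⟩ := mem_filter.mp hc
  have hsign : c.sign = a.sign := by rw [← h₂.digitCoeff_natAbs hc, hca, h]
  rwa [← Int.sign_mul_natAbs c, hsign, hca, Int.sign_mul_natAbs] at hc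

lemma digitCoeff_comb_eq_zero (hk : IsExpanding 3 k) (h₁ : IsDigitSet G₁) (h₂ : IsDigitSet G₂)
    (c₁ c₂ : ℤ) {N : ℤ} {C : ℕ}
    (hdom : ∀ p, C < p → N + (|c₁| + |c₂|) * ∑ i ∈ range p, k i < k p)
    (h : |c₁ * digitSum k G₁ + c₂ * digitSum k G₂| ≤ N) {p : ℕ} (hp : C < p) :
    c₁ * digitCoeff G₁ p + c₂ * digitCoeff G₂ p = 0 := by
  set P := (G₁ ∪ G₂).sup Int.natAbs + p + 1
  have hP : ∀ G ⊆ G₁ ∪ G₂, ∀ a ∈ G, a.natAbs < P := fun G hG a ha => by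
    have := le_sup (f := Int.natAbs) (hG ha)
    omega
  rw [digitSum_eq_sum_digitCoeff hk (hP G₁ subset_union_left),
    digitSum_eq_sum_digitCoeff hk (hP G₂ subset_union_right), mul_sum, mul_sum,
    ← sum_add_distrib] at h
  refine eq_zero_of_abs_sum_mul_le (u := fun i => k i)
    (c := fun i => c₁ * digitCoeff G₁ i + c₂ * digitCoeff G₂ i) (fun i => hk.nonneg i)
    (fun i => ?_) hdom (by simpa only [add_mul, mul_assoc] using h) hp (by omega)
  calc |c₁ * digitCoeff G₁ i + c₂ * digitCoeff G₂ i|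
      ≤ |c₁| * |digitCoeff G₁ i| + |c₂| * |digitCoeff G₂ i| := by
        rw [← abs_mul, ← abs_mul]; exact abs_add_le _ _
    _ ≤ |c₁| * 1 + |c₂| * 1 := by
        gcongr
        exacts [h₁.abs_digitCoeff_le_one i, h₂.abs_digitCoeff_le_one i]
    _ = |c₁| + |c₂| := by ring

lemma filter_lt_natAbs_eq (hk : IsExpanding 3 k) (h₁ : IsDigitSet G₁) (h₂ : IsDigitSet G₂)
    {N : ℤ} {C : ℕ} (hC : ∀ p : ℕ, C < p → 3 * N < k p)
    (h : |digitSum k G₁ - digitSum k G₂| ≤ N) :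
    G₁.filter (fun a => C < a.natAbs) = G₂.filter (fun a => C < a.natAbs) := by
  have hdom : ∀ p, C < p → N + (|1| + |-1|) * ∑ i ∈ range p, k i < k p := fun p hp => by
    have := hk.three_mul_sum_lt (p := p) (by omega)
    have := hC p hp
    norm_num
    linarith
  have hcoeff : ∀ p, C < p → digitCoeff G₁ p = digitCoeff G₂ p := fun p hp => by
    have := digitCoeff_comb_eq_zero hk h₁ h₂ 1 (-1) hdom (by simpa [sub_eq_add_neg] using h) hp
    linarith
  ext a
  simp only [mem_filter]
  exact ⟨fun ⟨ha, hlt⟩ => ⟨h₁.mem_of_digitCoeff_eq h₂ ha (hcoeff _ hlt), hlt⟩,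
    fun ⟨ha, hlt⟩ => ⟨h₂.mem_of_digitCoeff_eq h₁ ha (hcoeff _ hlt).symm, hlt⟩⟩

lemma eq_empty_of_two_mul_digitSum_add_eq_zero (hk : IsExpanding 3 k) {G' : Finset ℤ}
    (hG : IsDigitSet G) (hG' : IsDigitSet G') (h : 2 * digitSum k G + digitSum k G' = 0) :
    G = ∅ := by
  refine eq_empty_of_forall_notMem fun a ha => ?_
  have ha0 : a ≠ 0 := ne_of_mem_of_not_mem ha hG.1
  have hdom : ∀ p, 0 < p → 0 + (|2| + |1|) * ∑ i ∈ range p, k i < k p := fun p hp => by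
    have := hk.three_mul_sum_lt (p := p) (by omega)
    norm_num
    linarith
  have hcomb := digitCoeff_comb_eq_zero hk hG hG' 2 1 hdom (by simp [h])
    (Int.natAbs_pos.mpr ha0)
  rw [hG.digitCoeff_natAbs ha] at hcomb
  have := abs_le.mp (hG'.abs_digitCoeff_le_one a.natAbs)
  rcases lt_or_gt_of_ne ha0 with hs | hs
  · rw [Int.sign_eq_neg_one_of_neg hs] at hcomb; omega
  · rw [Int.sign_eq_one_of_pos hs] at hcomb; omega

lemma abs_digitSum_le (hk : IsExpanding b k) (hG : IsDigitSet G) {P : ℕ}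
    (hP : ∀ a ∈ G, a.natAbs < P) : |digitSum k G| ≤ ∑ i ∈ range P, k i := by
  rw [digitSum_eq_sum_digitCoeff hk hP]
  simpa using abs_sum_mul_le (u := fun i => k i) (fun i => hk.nonneg i) hG.abs_digitCoeff_le_one P

lemma digitSum_nonneg (hk : IsExpanding 3 k) (hG : ↑G ⊆ Set.Ioi (0 : ℤ)) : 0 ≤ digitSum k G :=
  sum_nonneg fun _ ha => (le_of_lt (hG ha)).trans (hk.le_apply (le_of_lt (hG ha)))

lemma lt_digitSum (hk : IsExpanding 3 k) {C : ℕ} (hG : ↑G ⊆ Set.Ioi (C : ℤ)) (hne : G.Nonempty) :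
    (C : ℤ) < digitSum k G := by
  obtain ⟨a, ha⟩ := hne
  have hpos : ∀ c ∈ G, (C : ℤ) < k c := fun c hc =>
    lt_of_lt_of_le (hG hc) (hk.le_apply (by have := Set.mem_Ioi.mp (hG hc); omega))
  calc (C : ℤ) < k a := hpos a ha
    _ ≤ digitSum k G := single_le_sum (fun c hc => by linarith [hpos c hc]) ha

lemma natAbs_le_of_abs_digitSum_le (hk : IsExpanding 3 k) (hG : IsDigitSet G)
    {N : ℤ} {C : ℕ} (hC : ∀ p : ℕ, C < p → 3 * N < k p) (h : |digitSum k G| ≤ N) :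
    ∀ a ∈ G, a.natAbs ≤ C := by
  have hempty := filter_lt_natAbs_eq hk hG (G₂ := ∅) ⟨by simp, by simp⟩ hC
    (by simpa [digitSum] using h)
  intro a ha
  by_contra hlt
  simpa using (Finset.ext_iff.mp hempty a).mp (mem_filter.mpr ⟨ha, not_le.mp hlt⟩)

lemma mem_digitSums_of_add_digitSum_mem (hk : IsExpanding 3 k) {P : Set ℤ}
    (hG : IsDigitSet G) {N : ℤ} {C : ℕ} (hC : ∀ p : ℕ, C < p → 3 * N < k p)
    (hGC : ∀ a ∈ G, C < a.natAbs) {s : ℤ} (hs : |s| ≤ N)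
    (h : s + digitSum k G ∈ digitSums k P) : s ∈ digitSums k P := by
  obtain ⟨Gu, hGu, hGuP, hsum⟩ := h
  have hhigh : Gu.filter (fun a => C < a.natAbs) = G := by
    rw [filter_lt_natAbs_eq hk hGu hG hC (by rwa [hsum, add_sub_cancel_right]),
      filter_true_of_mem hGC]
  refine ⟨Gu.filter (fun a => ¬ C < a.natAbs), hGu.mono (filter_subset _ _),
    (coe_subset.mpr (filter_subset _ _)).trans hGuP, ?_⟩
  have := sum_filter_not_add_sum_filter Gu (fun a => C < a.natAbs) k
  rw [hhigh] at this
  simp only [digitSum] at hsum ⊢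
  linarith

end Coefficients

section Expansions

variable {k : ℤ → ℤ}

lemma exists_isDigitSet_subset_digitSum_eq (hk : ∀ n, k (-n) = -k n) (G : Finset ℤ) :
    ∃ G₀ ⊆ G, IsDigitSet G₀ ∧ digitSum k G₀ = digitSum k G := by
  have hk0 : k 0 = 0 := by have := hk 0; rw [neg_zero] at this; omega
  refine ⟨G.filter (fun a => -a ∉ G), filter_subset _ _, ⟨by simp, ?_⟩, ?_⟩
  · intro a ha c hc h
    simp only [coe_filter] at ha hc
    rcases Int.natAbs_eq_natAbs_iff.mp h with h | rfl
    · exact h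
    · exact absurd (by simpa using hc.1) ha.2
  · have hcancel : ∑ a ∈ G with -a ∈ G, k a = 0 := by
      refine sum_involution (fun a _ => -a) (fun a _ => by rw [hk, add_neg_cancel]) ?_
        (fun a ha => by simp only [mem_filter, neg_neg] at ha ⊢; exact ⟨ha.2, ha.1⟩)
        (fun a _ => neg_neg a)
      rintro a - hka h
      exact hka (by rw [show a = 0 by omega, hk0])
    rw [digitSum, digitSum, ← sum_filter_not_add_sum_filter G (fun a => -a ∈ G), hcancel, add_zero]

lemma setOf_sum_subset_image_eq_digitSums (hk : IsExpanding 3 k) (P : Set ℤ) :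
    {t | ∃ F : Finset ℤ, ↑F ⊆ k '' P ∧ t = ∑ x ∈ F, x} = digitSums k P := by
  have hinj := hk.strictMono.injective
  ext t
  constructor
  · rintro ⟨F, hF, rfl⟩
    obtain ⟨G₀, hsub, hG₀, hsum⟩ :=
      exists_isDigitSet_subset_digitSum_eq hk.1 (F.preimage k hinj.injOn)
    refine ⟨G₀, hG₀, fun a ha => ?_, ?_⟩
    · obtain ⟨p, hp, hpa⟩ := hF (mem_preimage.mp (hsub ha))
      rwa [← hinj hpa]
    · rw [hsum]
      exact sum_preimage k F hinj.injOn id fun x hx hxk =>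
        absurd (Set.image_subset_range _ _ (hF hx)) hxk
  · rintro ⟨G, -, hGP, rfl⟩
    refine ⟨G.image k, by simpa using Set.image_mono hGP, ?_⟩
    rw [sum_image hinj.injOn, digitSum]

lemma digitSums_mono {P Q : Set ℤ} (h : P ⊆ Q) : digitSums k P ⊆ digitSums k Q :=
  fun _ ⟨G, hG, hGP, hGt⟩ => ⟨G, hG, hGP.trans h, hGt⟩

lemma IPk_eq_digitSums (hk : IsExpanding 3 k) : IPk k = digitSums k Set.univ := by
  rw [IPk, ← Set.image_univ, setOf_sum_subset_image_eq_digitSums hk]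

lemma IPkP_eq_digitSums (hk : IsExpanding 3 k) : IPkP k = digitSums k (Set.Ioi 0) :=
  setOf_sum_subset_image_eq_digitSums hk _

lemma exists_strictAnti_abs_enum {G : Finset ℤ} (hG : Set.InjOn Int.natAbs G) :
    ∃ (r : ℕ) (j : Fin r → ℤ), StrictAnti (fun i => |j i|) ∧ univ.image j = G := by
  classical
  set H := G.image Int.natAbs
  set e := H.orderEmbOfFin rfl
  let lift : ℕ → ℤ := fun n => if (n : ℤ) ∈ G then n else -n
  have habs : ∀ n, |lift n| = n := fun n => by by_cases h : (n : ℤ) ∈ G <;> simp [lift, h]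
  have hlift : ∀ a ∈ G, lift a.natAbs = a := by
    intro a ha
    rcases le_or_gt 0 a with h | h
    · simp [lift, Int.natAbs_of_nonneg h, ha]
    · have : -a ∉ G := fun h' => by have := hG h' ha (by simp); omega
      simp only [lift, Int.ofNat_natAbs_of_nonpos h.le, if_neg this, neg_neg]
  refine ⟨H.card, fun i => lift (e i.rev), fun i₁ i₂ h => ?_, ?_⟩
  · simp only [habs]
    exact_mod_cast e.strictMono (Fin.rev_lt_rev.mpr h)
  · ext a
    simp only [mem_image, mem_univ, true_and]
    constructor
    · rintro ⟨i, rfl⟩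
      obtain ⟨c, hc, hce⟩ := mem_image.mp (H.orderEmbOfFin_mem rfl i.rev)
      rw [← hce, hlift c hc]
      exact hc
    · intro ha
      obtain ⟨i, hi⟩ : a.natAbs ∈ Set.range e := by
        rw [range_orderEmbOfFin]
        exact mem_image_of_mem _ ha
      exact ⟨i.rev, by simp [hi, hlift a ha]⟩

lemma LengthVecSpec.apply_digitSum {lab : ℕ → ℕ} {R : ℤ → ℕ →₀ ℕ} (hR : LengthVecSpec k lab R)
    {G : Finset ℤ} (hG : IsDigitSet G) : R (digitSum k G) = lengthVec lab G := by
  obtain ⟨r, j, hj, rfl⟩ := exists_strictAnti_abs_enum hG.2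
  have hinj : Function.Injective j :=
    Function.Injective.of_comp (f := fun x : ℤ => |x|) hj.injective
  rw [digitSum, lengthVec, sum_image hinj.injOn, sum_image hinj.injOn]
  exact hR _ r j ⟨fun i h => hG.1 (h ▸ mem_image_of_mem j (mem_univ i)), fun _ _ h => hj h, rfl⟩

end Expansions

lemma lengthVec_pos {lab : ℕ → ℕ} {G : Finset ℤ} (hG : G.Nonempty) : 0 < lengthVec lab G := by
  obtain ⟨a, ha⟩ := hG
  exact pos_iff_ne_zero.mpr fun h => by simpa using (sum_eq_zero_iff.mp h) a ha

lemma PartitionSpec.lab_eq {D : ℕ → Set ℕ} {lab : ℕ → ℕ} (hD : PartitionSpec D lab) {n ℓ : ℕ}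
    (hn : n ∈ D ℓ) : lab n = ℓ := by
  by_contra h
  exact (Set.eq_empty_iff_forall_notMem.mp (hD.2.1 _ _ h)) n ⟨hD.2.2 n, hn⟩

lemma PartitionSpec.exists_lengthVec_eq {D : ℕ → Set ℕ} {lab : ℕ → ℕ} (hD : PartitionSpec D lab)
    (r : ℕ →₀ ℕ) (C : ℕ) : ∃ G : Finset ℤ, ↑G ⊆ Set.Ioi (C : ℤ) ∧ lengthVec lab G = r := by
  obtain ⟨s, rfl⟩ := Multiset.toFinsupp.surjective r
  induction s using Multiset.induction_on with
  | empty => exact ⟨∅, by simp, by simp [lengthVec]⟩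
  | cons ℓ s ih =>
    obtain ⟨G, hGC, hG⟩ := ih
    obtain ⟨n, ⟨hnD, hnC⟩, hnG⟩ := ((hD.1 ℓ).sdiff (Set.finite_Iic C)).exists_notMem_finset
      (G.preimage Nat.cast Nat.cast_injective.injOn)
    have hnG : (n : ℤ) ∉ G := fun h => hnG (mem_preimage.mpr h)
    refine ⟨insert (n : ℤ) G, ?_, ?_⟩
    · rw [coe_insert]
      exact Set.insert_subset (by simpa using hnC) hGC
    · rw [lengthVec, sum_insert hnG, ← lengthVec, hG, ← Multiset.singleton_add,
        Multiset.toFinsupp_add, Multiset.toFinsupp_singleton, Int.natAbs_natCast, hD.lab_eq hnD]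

lemma nhds_pi_discrete_hasBasis {ι X : Type*} [TopologicalSpace X] [DiscreteTopology X]
    (g : ι → X) :
    (𝓝 g).HasBasis (fun _ : Finset ι => True) (fun F => {g' | ∀ i ∈ F, g' i = g i}) := by
  rw [nhds_pi]
  simp only [nhds_discrete]
  exact (Filter.hasBasis_pi_pure g).to_hasBasis
    (fun I hI => ⟨hI.toFinset, trivial, fun g' hg' i hi => hg' i (hI.mem_toFinset.mpr hi)⟩)
    (fun F _ => ⟨F, F.finite_toSet, fun g' hg' i hi => hg' i hi⟩)

lemma recurrentLabel_iff {M : Set (ℕ →₀ ℕ)} :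
    RecurrentLabel M ↔ ∀ F : Finset (ℕ →₀ ℕ), ∃ r, 0 < r ∧ ∀ m ∈ F, (m + r ∈ M ↔ m ∈ M) := by
  have hbasis : (@nhds _ labTop M).HasBasis (fun _ : Finset (ℕ →₀ ℕ) => True)
      (fun F => labelInd ⁻¹' {g' | ∀ m ∈ F, g' m = labelInd M m}) := by
    rw [labTop, nhds_induced]
    exact (nhds_pi_discrete_hasBasis (labelInd M)).comap labelInd
  rw [RecurrentLabel, @mem_closure_iff_nhds_basis _ labTop _ _ _ _ _ hbasis]
  have hagree : ∀ (F : Finset (ℕ →₀ ℕ)) r,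
      labelInd (Msub M r) ∈ {g' | ∀ m ∈ F, g' m = labelInd M m} ↔
        ∀ m ∈ F, (m + r ∈ M ↔ m ∈ M) := fun F r => by
    simp [labelInd, Msub, decide_eq_decide]
  constructor
  · intro h F
    obtain ⟨_, ⟨r, hr, rfl⟩, hrF⟩ := h F trivial
    exact ⟨r, hr, (hagree F r).mp hrF⟩
  · intro h F _
    obtain ⟨r, hr, hrF⟩ := h F
    exact ⟨_, ⟨r, hr, rfl⟩, (hagree F r).mpr hrF⟩

lemma recurrentLabel_of_zero_notMem {M : Set (ℕ →₀ ℕ)} (hM : IsLabel M) (h0 : 0 ∉ M) :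
    RecurrentLabel M := by
  refine recurrentLabel_iff.mpr fun _ => ⟨Finsupp.single 0 1,
    pos_iff_ne_zero.mpr (Finsupp.single_ne_zero.mpr one_ne_zero), fun m _ => ?_⟩
  exact iff_of_false (fun h => h0 (hM _ _ zero_le h)) (fun h => h0 (hM _ _ zero_le h))

def IsReturnTime (A : Set ℤ) (W n : ℤ) : Prop :=
  ∀ s, |s| ≤ W → (s + n ∈ A ↔ s ∈ A)

lemma chiB_eq_chiB_iff {A : Set ℤ} {s t : ℤ} : chiB A s = chiB A t ↔ (s ∈ A ↔ t ∈ A) := by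
  simp [chiB, decide_eq_decide]

lemma recPt_chiB_of_forall_exists_ge {A : Set ℤ}
    (h : ∀ W a : ℤ, ∃ n, a ≤ n ∧ IsReturnTime A W n) : RecPt (chiB A) := by
  refine Or.inl ((nhds_pi_discrete_hasBasis _).mapClusterPt_iff_frequently.mpr fun T _ =>
    frequently_atTop.mpr fun a => ?_)
  obtain ⟨n, hn, hW⟩ := h (∑ s ∈ T, |s|) a
  exact ⟨n, hn, fun s hs =>
    chiB_eq_chiB_iff.mpr (hW s (single_le_sum (fun s _ => abs_nonneg s) hs))⟩

lemma RecPt.exists_lt_abs_isReturnTime {A : Set ℤ} (h : RecPt (chiB A)) (W K : ℤ) :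
    ∃ n, K < |n| ∧ IsReturnTime A W n := by
  have hW : ∀ n, shiftZ n (chiB A) ∈ {x | ∀ s ∈ Icc (-W) W, x s = chiB A s} →
      IsReturnTime A W n :=
    fun n hn s hs => chiB_eq_chiB_iff.mp (hn s (mem_Icc.mpr (abs_le.mp hs)))
  rcases h with h | h <;>
    have := (nhds_pi_discrete_hasBasis _).mapClusterPt_iff_frequently.mp h (Icc (-W) W) trivial
  · obtain ⟨n, hn, hnW⟩ := frequently_atTop.mp this (|K| + 1)
    exact ⟨n, by rw [abs_of_pos (by linarith [abs_nonneg K])]; linarith [le_abs_self K], hW n hnW⟩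
  · obtain ⟨n, hn, hnW⟩ := frequently_atBot.mp this (-(|K| + 1))
    exact ⟨n, by rw [abs_of_neg (by linarith [abs_nonneg K])]; linarith [le_abs_self K], hW n hnW⟩

/-- `A[𝓜]` with the digits of the expansion restricted to `P`: `P = univ` gives `A[𝓜]`,
`P = Ioi 0` gives `A₊[𝓜]`. -/
def labeledSums (k : ℤ → ℤ) (R : ℤ → ℕ →₀ ℕ) (M : Set (ℕ →₀ ℕ)) (P : Set ℤ) : Set ℤ :=
  {t | t ∈ digitSums k P ∧ R t ∈ M}

section LabeledSums

variable {k : ℤ → ℤ} {D : ℕ → Set ℕ} {lab : ℕ → ℕ} {R : ℤ → ℕ →₀ ℕ} {M : Set (ℕ →₀ ℕ)}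
  {P : Set ℤ}

lemma setA_eq_labeledSums (hk : IsExpanding 3 k) : setA k R M = labeledSums k R M Set.univ := by
  rw [setA, IPk_eq_digitSums hk, labeledSums]

lemma setAP_eq_labeledSums (hk : IsExpanding 3 k) :
    setAP k R M = labeledSums k R M (Set.Ioi 0) := by
  ext t
  rw [setAP, setA, IPk_eq_digitSums hk, IPkP_eq_digitSums hk]
  exact ⟨fun ⟨⟨_, hR⟩, hP⟩ => ⟨hP, hR⟩,
    fun ⟨hP, hR⟩ => ⟨⟨digitSums_mono (Set.subset_univ _) hP, hR⟩, hP⟩⟩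

lemma digitSum_mem_labeledSums_iff (hR : LengthVecSpec k lab R) {G : Finset ℤ}
    (hG : IsDigitSet G) (hGP : ↑G ⊆ P) :
    digitSum k G ∈ labeledSums k R M P ↔ lengthVec lab G ∈ M := by
  change _ ∧ _ ↔ _
  rw [hR.apply_digitSum hG]
  exact and_iff_right ⟨G, hG, hGP, rfl⟩

lemma add_digitSum_mem_labeledSums_iff (hk : IsExpanding 3 k) (hR : LengthVecSpec k lab R)
    {G : Finset ℤ} (hG : IsDigitSet G) (hGP : ↑G ⊆ P) {W : ℤ} {C : ℕ}
    (hC : ∀ p : ℕ, C < p → 3 * W < k p) (hGC : ∀ a ∈ G, C < a.natAbs) {s : ℤ} (hs : |s| ≤ W) :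
    s + digitSum k G ∈ labeledSums k R M P ↔ s ∈ digitSums k P ∧ R s + lengthVec lab G ∈ M := by
  by_cases hsP : s ∈ digitSums k P
  · obtain ⟨Gs, hGs, hGsP, rfl⟩ := hsP
    have hlow := natAbs_le_of_abs_digitSum_le hk hGs hC hs
    have hsep : ∀ a ∈ Gs, ∀ c ∈ G, a.natAbs < c.natAbs :=
      fun a ha c hc => (hlow a ha).trans_lt (hGC c hc)
    have hdisj := disjoint_of_natAbs_lt hsep
    rw [← digitSum_union hdisj, digitSum_mem_labeledSums_iff hR (hGs.union hG hsep)
      (coe_union Gs G ▸ Set.union_subset hGsP hGP), lengthVec_union hdisj, hR.apply_digitSum hGs]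
    exact (and_iff_right ⟨Gs, hGs, hGsP, rfl⟩).symm
  · exact iff_of_false (fun h => hsP (mem_digitSums_of_add_digitSum_mem hk hG hC hGC hs h.1))
      (fun h => hsP h.1)

theorem recPt_of_recurrentLabel (hk : IsExpanding 3 k) (hD : PartitionSpec D lab)
    (hR : LengthVecSpec k lab R) (hP : Set.Ioi 0 ⊆ P) (hM : RecurrentLabel M) :
    RecPt (chiB (labeledSums k R M P)) := by
  refine recPt_chiB_of_forall_exists_ge fun W a => ?_
  obtain ⟨r, hr, hrM⟩ := recurrentLabel_iff.mp hM ((Icc (-W) W).image R)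
  set C := max (3 * W).toNat a.toNat
  have hC : ∀ p : ℕ, C < p → 3 * W < k p := fun p hp =>
    lt_of_lt_of_le (by omega) (hk.le_apply p.cast_nonneg)
  obtain ⟨G, hGC, rfl⟩ := hD.exists_lengthVec_eq r C
  have hGpos : ↑G ⊆ Set.Ioi (0 : ℤ) := hGC.trans (Set.Ioi_subset_Ioi C.cast_nonneg)
  have hGhigh : ∀ a ∈ G, C < a.natAbs := fun a ha => by have := Set.mem_Ioi.mp (hGC ha); omega
  have hGne : G.Nonempty := nonempty_iff_ne_empty.mpr (by rintro rfl; simp [lengthVec] at hr)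
  refine ⟨digitSum k G, by have := lt_digitSum hk hGC hGne; omega, fun s hs => ?_⟩
  rw [add_digitSum_mem_labeledSums_iff hk hR (isDigitSet_of_subset_Ioi hGpos) (hGpos.trans hP) hC
    hGhigh hs]
  exact and_congr_right fun _ => hrM _ (mem_image_of_mem R (mem_Icc.mpr (abs_le.mp hs)))

end LabeledSums

section Backward

variable {k : ℤ → ℤ} {D : ℕ → Set ℕ} {lab : ℕ → ℕ} {R : ℤ → ℕ →₀ ℕ} {M : Set (ℕ →₀ ℕ)}
  {P : Set ℤ}

/-- A return time all of whose digits exceed `C` has a length vector `r` with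
`m + r ∈ 𝓜 ↔ m ∈ 𝓜` for all `m` represented by digits `≤ C`; `hlow` supplies such return
times. -/
theorem recurrentLabel_of_recPt (hk : IsExpanding 3 k) (hD : PartitionSpec D lab)
    (hR : LengthVecSpec k lab R) (hP : Set.Ioi 0 ⊆ P) (h0 : 0 ∈ M)
    (hlow : ∀ (C : ℕ) (G : Finset ℤ), IsDigitSet G → ↑G ⊆ P →
      digitSum k G ∈ labeledSums k R M P →
      IsReturnTime (labeledSums k R M P) (2 * ∑ i ∈ range (C + 1), k i) (digitSum k G) →
      G.filter (fun a => a.natAbs ≤ C) = ∅)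
    (hrec : RecPt (chiB (labeledSums k R M P))) : RecurrentLabel M := by
  refine recurrentLabel_iff.mpr fun F => ?_
  choose G hGpos hGm using fun m => hD.exists_lengthVec_eq m 0
  simp only [Nat.cast_zero] at hGpos
  set C := F.sup fun m => (G m).sup Int.natAbs
  set K := ∑ i ∈ range (C + 1), k i
  have hK : 0 ≤ K := sum_nonneg fun i _ => hk.nonneg i
  obtain ⟨n, hnK, hwin⟩ := hrec.exists_lt_abs_isReturnTime (2 * K) K
  have hzero : digitSum k ∅ ∈ labeledSums k R M P := by
    rw [digitSum_mem_labeledSums_iff hR ⟨by simp, by simp⟩ (by simp)]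
    simpa [lengthVec] using h0
  have hnA : n ∈ labeledSums k R M P := by
    simpa [digitSum] using (hwin 0 (by simp; linarith)).mpr hzero
  obtain ⟨H, hH, hHP, rfl⟩ := hnA.1
  have hHhigh : ∀ a ∈ H, C < a.natAbs := fun a ha => not_le.mp fun hle => by
    simpa using (Finset.ext_iff.mp (hlow C H hH hHP hnA hwin) a).mp (mem_filter.mpr ⟨ha, hle⟩)
  have hHne : H.Nonempty :=
    nonempty_iff_ne_empty.mpr (by rintro rfl; simp [digitSum] at hnK; linarith)
  refine ⟨lengthVec lab H, lengthVec_pos hHne, fun m hm => ?_⟩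
  have hGmd : IsDigitSet (G m) := isDigitSet_of_subset_Ioi (hGpos m)
  have hGmC : ∀ a ∈ G m, a.natAbs ≤ C := fun a ha =>
    (le_sup (f := Int.natAbs) ha).trans (le_sup (f := fun m => (G m).sup Int.natAbs) hm)
  have hsep : ∀ a ∈ G m, ∀ c ∈ H, a.natAbs < c.natAbs :=
    fun a ha c hc => (hGmC a ha).trans_lt (hHhigh c hc)
  have hdisj := disjoint_of_natAbs_lt hsep
  have hGmK : |digitSum k (G m)| ≤ 2 * K :=
    (abs_digitSum_le hk hGmd fun a ha => Nat.lt_succ_of_le (hGmC a ha)).trans (by linarith)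
  rw [← hGm m, ← lengthVec_union hdisj, ← digitSum_mem_labeledSums_iff hR (hGmd.union hH hsep)
      (coe_union (G m) H ▸ Set.union_subset ((hGpos m).trans hP) hHP),
    digitSum_union hdisj, hwin _ hGmK, digitSum_mem_labeledSums_iff hR hGmd ((hGpos m).trans hP)]

lemma filter_natAbs_le_eq_empty_of_isReturnTime_univ (hk : IsExpanding 3 k)
    (hR : LengthVecSpec k lab R) {C : ℕ} {G : Finset ℤ} (hG : IsDigitSet G)
    (hGA : digitSum k G ∈ labeledSums k R M Set.univ)
    (hwin : IsReturnTime (labeledSums k R M Set.univ) (2 * ∑ i ∈ range (C + 1), k i)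
      (digitSum k G)) :
    G.filter (fun a => a.natAbs ≤ C) = ∅ := by
  set L := G.filter (fun a => a.natAbs ≤ C)
  set H := G.filter (fun a => ¬ a.natAbs ≤ C)
  have hL : IsDigitSet L := hG.mono (filter_subset _ _)
  have hLK := abs_digitSum_le hk hL fun a ha => Nat.lt_succ_of_le (mem_filter.mp ha).2
  have hsep : ∀ a ∈ L.image Neg.neg, ∀ c ∈ H, a.natAbs < c.natAbs := by
    simp only [mem_image, mem_filter, L, H]
    rintro _ ⟨a, ⟨-, ha⟩, rfl⟩ c ⟨-, hc⟩
    rw [Int.natAbs_neg]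
    omega
  have hdisj := disjoint_of_natAbs_lt hsep
  -- flipping the signs of the low digits keeps the length vector
  have hflip : -2 * digitSum k L + digitSum k G ∈ labeledSums k R M Set.univ := by
    have hsum : -2 * digitSum k L + digitSum k G = digitSum k (L.image Neg.neg ∪ H) := by
      rw [digitSum_union hdisj, digitSum_image_neg hk.1, digitSum, digitSum, digitSum,
        ← sum_filter_add_sum_filter_not G (fun a => a.natAbs ≤ C)]
      ring
    rw [hsum, digitSum_mem_labeledSums_iff hR
      (hL.image_neg.union (hG.mono (filter_subset _ _)) hsep) (Set.subset_univ _), lengthVec_union hdisj, lengthVec_image_neg, lengthVec, lengthVec,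
      sum_filter_add_sum_filter_not, ← lengthVec, ← hR.apply_digitSum hG]
    exact hGA.2
  have hK : 0 ≤ ∑ i ∈ range (C + 1), k i := sum_nonneg fun i _ => hk.nonneg i
  obtain ⟨⟨G', hG', -, hG'sum⟩, -⟩ :=
    (hwin _ (by rw [abs_mul]; norm_num; linarith)).mp hflip
  exact eq_empty_of_two_mul_digitSum_add_eq_zero hk hL hG' (by linarith)

lemma filter_natAbs_le_eq_empty_of_isReturnTime_Ioi (hk : IsExpanding 3 k)
    (hR : LengthVecSpec k lab R) (hM : IsLabel M) {C : ℕ} {G : Finset ℤ} (hG : IsDigitSet G)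
    (hGP : ↑G ⊆ Set.Ioi (0 : ℤ)) (hGA : digitSum k G ∈ labeledSums k R M (Set.Ioi 0))
    (hwin : IsReturnTime (labeledSums k R M (Set.Ioi 0)) (2 * ∑ i ∈ range (C + 1), k i)
      (digitSum k G)) :
    G.filter (fun a => a.natAbs ≤ C) = ∅ := by
  set L := G.filter (fun a => a.natAbs ≤ C)
  set H := G.filter (fun a => ¬ a.natAbs ≤ C)
  have hL : IsDigitSet L := hG.mono (filter_subset _ _)
  have hLK := abs_digitSum_le hk hL fun a ha => Nat.lt_succ_of_le (mem_filter.mp ha).2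
  have hsplit : digitSum k L + digitSum k H = digitSum k G := sum_filter_add_sum_filter_not _ _ _
  have hdrop : -digitSum k L + digitSum k G ∈ labeledSums k R M (Set.Ioi 0) := by
    rw [show -digitSum k L + digitSum k G = digitSum k H by linarith,
      digitSum_mem_labeledSums_iff hR (hG.mono (filter_subset _ _))
        ((coe_subset.mpr (filter_subset _ _)).trans hGP)]
    refine hM _ _ ?_ (hR.apply_digitSum hG ▸ hGA.2)
    rw [lengthVec, lengthVec, ← sum_filter_add_sum_filter_not G (fun a => a.natAbs ≤ C)]
    exact le_add_self
  have hK : 0 ≤ ∑ i ∈ range (C + 1), k i := sum_nonneg fun i _ => hk.nonneg i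
  obtain ⟨⟨G', -, hG'P, hG'sum⟩, -⟩ := (hwin _ (by rw [abs_neg]; linarith)).mp hdrop
  by_contra hne
  have hLpos : ↑L ⊆ Set.Ioi ((0 : ℕ) : ℤ) := fun a ha => by
    simpa using hGP (mem_filter.mp ha).1
  have := lt_digitSum hk hLpos (nonempty_iff_ne_empty.mpr hne)
  have := digitSum_nonneg hk hG'P
  push_cast at *
  linarith

end Backward

theorem stmt17_general (b : ℕ) (hb : 3 ≤ b) (k : ℤ → ℤ) (hk : IsExpanding b k)
    (D : ℕ → Set ℕ) (lab : ℕ → ℕ) (hD : PartitionSpec D lab)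
    (R : ℤ → ℕ →₀ ℕ) (hR : LengthVecSpec k lab R)
    (M : Set (ℕ →₀ ℕ)) (hM : IsLabel M) :
    (RecurrentLabel M ↔ RecPt (xL k R M)) ∧
    (RecurrentLabel M ↔ RecPt (xLP k R M)) := by
  have hk3 := hk.of_three_le hb
  rw [xL, xLP, setA_eq_labeledSums hk3, setAP_eq_labeledSums hk3]
  have hfwd {P : Set ℤ} (hP : Set.Ioi 0 ⊆ P) (h : RecurrentLabel M) :=
    recPt_of_recurrentLabel hk3 hD hR hP h
  by_cases h0 : (0 : ℕ →₀ ℕ) ∈ M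
  · exact ⟨⟨hfwd (Set.subset_univ _), recurrentLabel_of_recPt hk3 hD hR (Set.subset_univ _) h0
        fun _ _ hG _ => filter_natAbs_le_eq_empty_of_isReturnTime_univ hk3 hR hG⟩,
      ⟨hfwd le_rfl, recurrentLabel_of_recPt hk3 hD hR le_rfl h0
        fun _ _ hG hGP => filter_natAbs_le_eq_empty_of_isReturnTime_Ioi hk3 hR hM hG hGP⟩⟩
  · have hrec := recurrentLabel_of_zero_notMem hM h0
    exact ⟨iff_of_true hrec (hfwd (Set.subset_univ _) hrec), iff_of_true hrec (hfwd le_rfl hrec)⟩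

/-- With the standing labeled-subshift setup, for a label `𝓜` the following are equivalent:
`𝓜` is recurrent; `x[𝓜]` is a recurrent point for the shift; `x₊[𝓜]` is a recurrent point
for the shift. -/
theorem stmt17 (b : ℕ) (hb : 3 ≤ b) (k : ℤ → ℤ) (hk : IsExpanding b k)
    (hk1 : (b : ℤ) + 1 < k 1)
    (D : ℕ → Set ℕ) (lab : ℕ → ℕ) (hD : PartitionSpec D lab)
    (R : ℤ → ℕ →₀ ℕ) (hR : LengthVecSpec k lab R)
    (M : Set (ℕ →₀ ℕ)) (hM : IsLabel M) :
    (RecurrentLabel M ↔ RecPt (xL k R M)) ∧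
    (RecurrentLabel M ↔ RecPt (xLP k R M)) :=
  stmt17_general b hb k hk D lab hD R hR M hM
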